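/- Let f : ℝ → ℂ be almost periodic. The exponent set of f, defined as the set of λ ∈ ℝ for which lim_{T→∞} (1/T) ∫_0^T f(t) e^{-iλt} dt ≠ 0, is countable. -/

import Mathlib

open Filter Complex

/-- Bochner almost periodicity. -/
def AlmostPeriodic (f : ℝ → ℂ) : Prop :=
  ∀ t : ℕ → ℝ, ∃ φ : ℕ → ℕ, StrictMono φ ∧
    ∃ g : ℝ → ℂ, TendstoUniformly (fun k x => f (x + t (φ k))) g atTop

lemma conj_exp_I (l t : ℝ) :
    (starRingEnd ℂ) (Complex.exp (Complex.I * l * t)) = Complex.exp (-(Complex.I * l * t)) := by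
  rw [← Complex.exp_conj]
  congr 1
  simp [map_mul, Complex.conj_I]


lemma ap_bounded (f : ℝ → ℂ) (haf : AlmostPeriodic f) : ∃ C : ℝ, 0 ≤ C ∧ ∀ x, ‖f x‖ ≤ C := by
  by_contra h
  push_neg at h
  have h' : ∀ n : ℕ, ∃ x : ℝ, (n : ℝ) < ‖f x‖ := by
    intro n
    obtain ⟨x, hx⟩ := h (max n 0) (le_max_right _ _)
    exact ⟨x, lt_of_le_of_lt (le_max_left _ _) hx⟩
  choose t ht using h'
  obtain ⟨φ, hφ, g, hg⟩ := haf t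
  have := (Metric.tendstoUniformly_iff.mp hg 1 one_pos)
  rw [eventually_atTop] at this
  obtain ⟨N, hN⟩ := this
  obtain ⟨k, hk1, hk2⟩ : ∃ k, N ≤ k ∧ ‖g 0‖ + 1 ≤ (k : ℝ) := by
    obtain ⟨m, hm⟩ := exists_nat_ge (‖g 0‖ + 1)
    exact ⟨max N m, le_max_left _ _, hm.trans (by exact_mod_cast le_max_right N m)⟩
  have h1 := hN k hk1 0
  have h2 := ht (φ k)
  have h3 : (k : ℝ) ≤ (φ k : ℝ) := by exact_mod_cast hφ.id_le k
  rw [zero_add] at h1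
  have : ‖f (t (φ k))‖ ≤ ‖g 0‖ + 1 := by
    have := norm_sub_norm_le (f (t (φ k))) (g 0)
    rw [dist_eq_norm] at h1
    rw [norm_sub_rev] at h1
    linarith [this, h1.le]
  linarith


lemma mean_exp_zero (θ : ℝ) (hθ : θ ≠ 0) :
    Tendsto (fun T : ℝ => (T : ℂ)⁻¹ * ∫ t in (0:ℝ)..T, Complex.exp (Complex.I * θ * t))
      atTop (nhds 0) := by
  have hc : Complex.I * θ ≠ 0 := by
    simp [Complex.I_ne_zero, Complex.ofReal_eq_zero, hθ]
  apply squeeze_zero_norm' (a := fun T : ℝ => T⁻¹ * (2 / ‖(Complex.I * θ : ℂ)‖))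
  · filter_upwards [eventually_ge_atTop (1:ℝ)] with T hT
    have hT0 : (0:ℝ) < T := lt_of_lt_of_le one_pos hT
    have : ∫ t in (0:ℝ)..T, Complex.exp (Complex.I * θ * t)
        = (Complex.exp (Complex.I * θ * T) - Complex.exp (Complex.I * θ * 0)) / (Complex.I * θ) := by
      simpa using integral_exp_mul_complex hc (a := 0) (b := T)
    rw [this]
    rw [norm_mul, norm_inv, norm_div]
    gcongr
    · simp [Complex.norm_real, abs_of_pos hT0]
    · have e1 : ‖Complex.exp (Complex.I * θ * T)‖ = 1 := by
        rw [Complex.norm_exp]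
        simp [Complex.mul_re]
      have e2 : ‖Complex.exp (Complex.I * θ * 0)‖ = 1 := by
        simp
      calc ‖Complex.exp (Complex.I * θ * T) - Complex.exp (Complex.I * θ * 0)‖
          ≤ ‖Complex.exp (Complex.I * θ * T)‖ + ‖Complex.exp (Complex.I * θ * 0)‖ := norm_sub_le _ _
        _ = 2 := by rw [e1, e2]; norm_num
  · simpa using tendsto_inv_atTop_zero.mul_const (2 / ‖(Complex.I * θ : ℂ)‖)

lemma exp_integrable (z c : ℂ) (T : ℝ) :
    IntervalIntegrable (fun t : ℝ => c * Complex.exp (z * t))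
      MeasureTheory.volume 0 T :=
  (continuous_const.mul (Complex.continuous_exp.comp
    (continuous_const.mul Complex.continuous_ofReal))).intervalIntegrable _ _

lemma double_sum_integral (S : Finset ℝ) (a : ℝ → ℂ) (T : ℝ) :
    (∫ t in (0:ℝ)..T, ∑ l ∈ S, ∑ m ∈ S,
      (a l * (starRingEnd ℂ) (a m)) * Complex.exp (Complex.I * ((l - m : ℝ):ℂ) * t))
    = ∑ l ∈ S, ∑ m ∈ S, (a l * (starRingEnd ℂ) (a m)) *
        ∫ t in (0:ℝ)..T, Complex.exp (Complex.I * ((l - m : ℝ):ℂ) * t) := by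
  have e1 : ∀ t : ℝ, (∑ l ∈ S, ∑ m ∈ S,
      (a l * (starRingEnd ℂ) (a m)) * Complex.exp (Complex.I * ((l - m : ℝ):ℂ) * t))
      = ∑ p ∈ S ×ˢ S, (a p.1 * (starRingEnd ℂ) (a p.2))
          * Complex.exp (Complex.I * ((p.1 - p.2 : ℝ):ℂ) * t) := by
    intro t
    rw [Finset.sum_product]
  have h : ∀ p ∈ S ×ˢ S, IntervalIntegrable
      (fun t : ℝ => (a p.1 * (starRingEnd ℂ) (a p.2)) *
        Complex.exp (Complex.I * ((p.1 - p.2 : ℝ):ℂ) * t)) MeasureTheory.volume 0 T :=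
    fun p _ => exp_integrable (Complex.I * ((p.1 - p.2 : ℝ):ℂ)) _ T
  rw [intervalIntegral.integral_congr (fun t _ => e1 t),
    intervalIntegral.integral_finset_sum h, Finset.sum_product]
  apply Finset.sum_congr rfl
  intro l _
  apply Finset.sum_congr rfl
  intro m _
  rw [intervalIntegral.integral_const_mul]

set_option maxHeartbeats 1000000 in
lemma bessel (f : ℝ → ℂ) (hf : Continuous f) (C : ℝ) (hC : ∀ x, ‖f x‖ ≤ C)
    (S : Finset ℝ) (a : ℝ → ℂ)
    (ha : ∀ l ∈ S, Tendsto (fun T : ℝ => (T:ℂ)⁻¹ *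
      ∫ t in (0:ℝ)..T, f t * Complex.exp (-(Complex.I * l * t))) atTop (nhds (a l))) :
    ∑ l ∈ S, Complex.normSq (a l) ≤ C^2 := by
  classical
  set P : ℝ → ℂ := fun t => ∑ l ∈ S, a l * Complex.exp (Complex.I * l * t) with hPdef
  have hcexp : ∀ l : ℝ, Continuous fun t : ℝ => Complex.exp (Complex.I * l * t) := by
    intro l
    exact Complex.continuous_exp.comp (continuous_const.mul Complex.continuous_ofReal)
  have hcexp' : ∀ l : ℝ, Continuous fun t : ℝ => Complex.exp (-(Complex.I * l * t)) := by
    intro l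
    exact Complex.continuous_exp.comp ((continuous_const.mul Complex.continuous_ofReal).neg)
  have hP : Continuous P := by
    apply continuous_finset_sum
    intro l _
    exact continuous_const.mul (hcexp l)
  set B : ℝ → ℂ := fun T => ∑ l ∈ S, (starRingEnd ℂ) (a l) *
      ((T:ℂ)⁻¹ * ∫ t in (0:ℝ)..T, f t * Complex.exp (-(Complex.I * l * t))) with hBdef
  set E : ℝ → ℝ → ℂ := fun θ T => (T:ℂ)⁻¹ * ∫ t in (0:ℝ)..T, Complex.exp (Complex.I * θ * t)
    with hEdef
  set K : ℝ → ℂ := fun T => ∑ l ∈ S, ∑ m ∈ S,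
      (a l * (starRingEnd ℂ) (a m)) * E (l - m) T with hKdef
  -- Claim A : convergence
  have hB : Tendsto B atTop (nhds (∑ l ∈ S, (starRingEnd ℂ) (a l) * a l)) := by
    apply tendsto_finset_sum
    intro l hl
    exact (ha l hl).const_mul _
  have hK : Tendsto K atTop
      (nhds (∑ l ∈ S, ∑ m ∈ S, if l = m then a l * (starRingEnd ℂ) (a m) else 0)) := by
    apply tendsto_finset_sum
    intro l _
    apply tendsto_finset_sum
    intro m _
    by_cases hlm : l = m
    · simp only [if_pos hlm]
      apply Tendsto.congr' (f₁ := fun _ => a l * (starRingEnd ℂ) (a m))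
      · filter_upwards [eventually_ge_atTop (1:ℝ)] with T hT
        have hT0 : (T:ℂ) ≠ 0 := by
          exact_mod_cast ne_of_gt (lt_of_lt_of_le one_pos hT)
        have : E (l - m) T = 1 := by
          simp only [hEdef, hlm, sub_self]
          push_cast
          simp only [mul_zero, zero_mul, Complex.exp_zero]
          rw [intervalIntegral.integral_const]
          simp [inv_mul_cancel₀ hT0]
        rw [this, mul_one]
      · exact tendsto_const_nhds
    · simp only [if_neg hlm]
      have := (mean_exp_zero (l - m) (sub_ne_zero.mpr hlm)).const_mul
        (a l * (starRingEnd ℂ) (a m))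
      simpa only [mul_zero] using this
  have htend : Tendsto (fun T => 2 * (B T).re - (K T).re) atTop
      (nhds (∑ l ∈ S, Complex.normSq (a l))) := by
    have h1 : Tendsto (fun T => (B T).re) atTop
        (nhds (∑ l ∈ S, Complex.normSq (a l))) := by
      have : Tendsto (fun T => (B T).re) atTop _ := (Complex.continuous_re.tendsto _).comp hB
      convert this using 2
      rw [Complex.re_sum]
      apply Finset.sum_congr rfl
      intro l _
      rw [mul_comm, Complex.mul_conj]
      simp
    have h2 : Tendsto (fun T => (K T).re) atTop
        (nhds (∑ l ∈ S, Complex.normSq (a l))) := by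
      have : Tendsto (fun T => (K T).re) atTop _ := (Complex.continuous_re.tendsto _).comp hK
      convert this using 2
      rw [Complex.re_sum]
      apply Finset.sum_congr rfl
      intro l hl
      rw [Finset.sum_ite_eq S l (fun m => a l * (starRingEnd ℂ) (a m)), if_pos hl]
      rw [Complex.mul_conj]
      simp
    have := ((h1.const_mul 2).sub h2)
    convert this using 1
    ring
  -- Claim B : eventual bound
  have hbound : ∀ᶠ T in atTop, 2 * (B T).re - (K T).re ≤ C^2 := by
    filter_upwards [eventually_ge_atTop (1:ℝ)] with T hT
    have hT0 : (0:ℝ) < T := lt_of_lt_of_le one_pos hT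
    have hTne : (T:ℂ) ≠ 0 := by exact_mod_cast ne_of_gt hT0
    -- integrability
    have int_fp : IntervalIntegrable (fun t => f t * (starRingEnd ℂ) (P t))
        MeasureTheory.volume 0 T :=
      (hf.mul (Complex.continuous_conj.comp hP)).intervalIntegrable _ _
    have int_pp : IntervalIntegrable (fun t => P t * (starRingEnd ℂ) (P t))
        MeasureTheory.volume 0 T :=
      (hP.mul (Complex.continuous_conj.comp hP)).intervalIntegrable _ _
    -- key1 : B T in terms of the integral of f * conj P
    have key1 : B T = (T:ℂ)⁻¹ * ∫ t in (0:ℝ)..T, f t * (starRingEnd ℂ) (P t) := by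
      have point : ∀ t : ℝ, f t * (starRingEnd ℂ) (P t)
          = ∑ m ∈ S, (starRingEnd ℂ) (a m) * (f t * Complex.exp (-(Complex.I * m * t))) := by
        intro t
        simp only [hPdef, map_sum, map_mul, conj_exp_I, Finset.mul_sum]
        apply Finset.sum_congr rfl
        intro m _
        ring
      have hint : ∀ m ∈ S, IntervalIntegrable
          (fun t : ℝ => (starRingEnd ℂ) (a m) * (f t * Complex.exp (-(Complex.I * m * t))))
          MeasureTheory.volume 0 T :=
        fun m _ => (continuous_const.mul (hf.mul (hcexp' m))).intervalIntegrable _ _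
      rw [intervalIntegral.integral_congr (fun t _ => point t),
        intervalIntegral.integral_finset_sum hint, Finset.mul_sum]
      apply Finset.sum_congr rfl
      intro m _
      rw [intervalIntegral.integral_const_mul]
      ring
    -- key2 : K T in terms of the integral of P * conj P
    have key2 : K T = (T:ℂ)⁻¹ * ∫ t in (0:ℝ)..T, P t * (starRingEnd ℂ) (P t) := by
      have point : ∀ t : ℝ, P t * (starRingEnd ℂ) (P t)
          = ∑ l ∈ S, ∑ m ∈ S, (a l * (starRingEnd ℂ) (a m))
              * Complex.exp (Complex.I * ((l - m : ℝ):ℂ) * t) := by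
        intro t
        have hconjP : (starRingEnd ℂ) (P t)
            = ∑ m ∈ S, (starRingEnd ℂ) (a m) * Complex.exp (-(Complex.I * m * t)) := by
          simp only [hPdef, map_sum, map_mul, conj_exp_I]
        rw [hconjP, hPdef]
        rw [Finset.sum_mul_sum]
        apply Finset.sum_congr rfl
        intro l _
        apply Finset.sum_congr rfl
        intro m _
        rw [mul_mul_mul_comm]
        congr 1
        rw [← Complex.exp_add]
        congr 1
        push_cast
        ring
      rw [intervalIntegral.integral_congr (fun t _ => point t), double_sum_integral]
      simp only [hKdef, hEdef, Finset.mul_sum]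
      apply Finset.sum_congr rfl
      intro l _
      apply Finset.sum_congr rfl
      intro m _
      ring
    -- nonnegativity and expansion
    have hnn : (0:ℝ) ≤ ∫ t in (0:ℝ)..T, Complex.normSq (f t - P t) := by
      apply intervalIntegral.integral_nonneg hT0.le
      intro t _
      exact Complex.normSq_nonneg _
    have expand : (∫ t in (0:ℝ)..T, Complex.normSq (f t - P t))
        = (∫ t in (0:ℝ)..T, Complex.normSq (f t))
          + (∫ t in (0:ℝ)..T, P t * (starRingEnd ℂ) (P t)).re
          - 2 * (∫ t in (0:ℝ)..T, f t * (starRingEnd ℂ) (P t)).re := by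
      have point : ∀ t : ℝ, Complex.normSq (f t - P t)
          = Complex.normSq (f t) + (P t * (starRingEnd ℂ) (P t)).re
            - 2 * (f t * (starRingEnd ℂ) (P t)).re := by
        intro t
        rw [Complex.normSq_sub]
        congr 2
        rw [Complex.mul_conj]
        simp
      have i1 : IntervalIntegrable (fun t => Complex.normSq (f t))
          MeasureTheory.volume 0 T :=
        (Complex.continuous_normSq.comp hf).intervalIntegrable _ _
      have i2 : IntervalIntegrable (fun t => (P t * (starRingEnd ℂ) (P t)).re)
          MeasureTheory.volume 0 T :=
        (Complex.continuous_re.comp (hP.mul (Complex.continuous_conj.comp hP))).intervalIntegrable _ _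
      have i3 : IntervalIntegrable (fun t => 2 * (f t * (starRingEnd ℂ) (P t)).re)
          MeasureTheory.volume 0 T :=
        (continuous_const.mul (Complex.continuous_re.comp
          (hf.mul (Complex.continuous_conj.comp hP)))).intervalIntegrable _ _
      rw [intervalIntegral.integral_congr (fun t _ => point t),
        intervalIntegral.integral_sub (i1.add i2) i3, intervalIntegral.integral_add i1 i2]
      congr 1
      · congr 1
        exact (Complex.reCLM.intervalIntegral_comp_comm int_pp)
      · rw [intervalIntegral.integral_const_mul]
        congr 1
        exact (Complex.reCLM.intervalIntegral_comp_comm int_fp)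
    -- bound on mean of |f|^2
    have hfb : (∫ t in (0:ℝ)..T, Complex.normSq (f t)) ≤ C^2 * T := by
      have : (∫ t in (0:ℝ)..T, Complex.normSq (f t)) ≤ ∫ _t in (0:ℝ)..T, C^2 := by
        apply intervalIntegral.integral_mono_on hT0.le
          ((Complex.continuous_normSq.comp hf).intervalIntegrable _ _)
          (intervalIntegrable_const)
        intro t _
        simp only [Function.comp_apply]
        rw [Complex.normSq_eq_norm_sq]
        have h0 : (0:ℝ) ≤ ‖f t‖ := norm_nonneg _
        nlinarith [hC t]
      simpa [mul_comm] using this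
    -- put together
    have hre1 : (B T).re = T⁻¹ * (∫ t in (0:ℝ)..T, f t * (starRingEnd ℂ) (P t)).re := by
      rw [key1, ← Complex.ofReal_inv, Complex.re_ofReal_mul]
    have hre2 : (K T).re = T⁻¹ * (∫ t in (0:ℝ)..T, P t * (starRingEnd ℂ) (P t)).re := by
      rw [key2, ← Complex.ofReal_inv, Complex.re_ofReal_mul]
    rw [hre1, hre2]
    have hTinv : (0:ℝ) < T⁻¹ := inv_pos.mpr hT0
    have step : 2 * (∫ t in (0:ℝ)..T, f t * (starRingEnd ℂ) (P t)).re
        - (∫ t in (0:ℝ)..T, P t * (starRingEnd ℂ) (P t)).re ≤ C^2 * T := by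
      rw [expand] at hnn
      linarith
    calc 2 * (T⁻¹ * (∫ t in (0:ℝ)..T, f t * (starRingEnd ℂ) (P t)).re)
        - T⁻¹ * (∫ t in (0:ℝ)..T, P t * (starRingEnd ℂ) (P t)).re
        = T⁻¹ * (2 * (∫ t in (0:ℝ)..T, f t * (starRingEnd ℂ) (P t)).re
            - (∫ t in (0:ℝ)..T, P t * (starRingEnd ℂ) (P t)).re) := by ring
      _ ≤ T⁻¹ * (C^2 * T) := mul_le_mul_of_nonneg_left step hTinv.le
      _ = C^2 := by field_simp
  exact le_of_tendsto htend hbound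

/-- The exponent set of an almost periodic function, i.e. the set of `λ` whose
Bohr–Fourier coefficient is nonzero, is countable. -/
theorem stmt_2 (f : ℝ → ℂ) (hf : Continuous f) (haf : AlmostPeriodic f) :
    Set.Countable {lam : ℝ | ∃ c : ℂ, c ≠ 0 ∧ Tendsto
      (fun T : ℝ => (T : ℂ)⁻¹ *
        ∫ t in (0:ℝ)..T, f t * Complex.exp (-(Complex.I * (lam : ℂ) * (t : ℂ))))
      atTop (nhds c)} := by
  classical
  obtain ⟨C, hC0, hC⟩ := ap_bounded f haf
  set Ex := {lam : ℝ | ∃ c : ℂ, c ≠ 0 ∧ Tendsto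
      (fun T : ℝ => (T : ℂ)⁻¹ *
        ∫ t in (0:ℝ)..T, f t * Complex.exp (-(Complex.I * (lam : ℂ) * (t : ℂ))))
      atTop (nhds c)} with hEx
  set a : ℝ → ℂ := fun lam => if h : lam ∈ Ex then h.choose else 0 with hadef
  have ha : ∀ lam ∈ Ex, a lam ≠ 0 ∧ Tendsto
      (fun T : ℝ => (T : ℂ)⁻¹ *
        ∫ t in (0:ℝ)..T, f t * Complex.exp (-(Complex.I * (lam : ℂ) * (t : ℂ))))
      atTop (nhds (a lam)) := by
    intro lam h
    simp only [hadef, dif_pos h]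
    exact ⟨h.choose_spec.1, h.choose_spec.2⟩
  have hsub : Ex ⊆ ⋃ n : ℕ, {lam : ℝ | lam ∈ Ex ∧ 1/(n+1 : ℝ) ≤ Complex.normSq (a lam)} := by
    intro lam h
    have hpos : 0 < Complex.normSq (a lam) := by
      rw [Complex.normSq_pos]
      exact (ha lam h).1
    obtain ⟨n, hn⟩ := exists_nat_one_div_lt hpos
    exact Set.mem_iUnion.mpr ⟨n, h, hn.le⟩
  have hfin : ∀ n : ℕ, {lam : ℝ | lam ∈ Ex ∧ 1/(n+1 : ℝ) ≤ Complex.normSq (a lam)}.Finite := by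
    intro n
    by_contra hinf
    replace hinf : Set.Infinite _ := hinf
    obtain ⟨S, hS, hcard⟩ := hinf.exists_subset_card_eq (⌈C^2 * (n+1)⌉₊ + 1)
    have hb := bessel f hf C hC S a (fun l hl => (ha l (hS hl).1).2)
    have hlow : (S.card : ℝ) * (1/(n+1 : ℝ)) ≤ ∑ l ∈ S, Complex.normSq (a l) := by
      have := Finset.card_nsmul_le_sum S (fun l => Complex.normSq (a l)) (1/(n+1 : ℝ))
        (fun l hl => (hS hl).2)
      simpa [nsmul_eq_mul] using this
    have hnp : (0:ℝ) < 1/(n+1 : ℝ) := by positivity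
    have h1 : (S.card : ℝ) ≤ C^2 * (n+1) := by
      have h2 : (S.card : ℝ) * (1/(n+1:ℝ)) ≤ C^2 := le_trans hlow hb
      have hn1 : (0:ℝ) < (n:ℝ) + 1 := by positivity
      rw [mul_one_div, div_le_iff₀ hn1] at h2
      exact h2
    have h3 : C^2 * (n+1) ≤ (⌈C^2 * (n+1)⌉₊ : ℝ) := Nat.le_ceil _
    rw [hcard] at h1
    push_cast at h1
    linarith
  exact Set.Countable.mono hsub (Set.countable_iUnion (fun n => (hfin n).countable))
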